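/- Let N ≥ 1, m ≥ 2 be integers, d ≥ 2, and a = (a_1, ..., a_d) with each a_j ∈ Z_m \ {0}. Suppose |S_d(a/m; n)| ≤ c K for all n ≤ N and some K ≥ 0. Then for any τ > 0 with τ = O(1) and any x ∈ T^d with 0 ≤ x_j − a_j/m < τ N^{−j} for j = 1, ..., d, we have |S_d(x; N) − S_d(a/m; N)| ≤ C τ K for an absolute constant C. -/

import Mathlib

/-!
Write `x = a/m + δ` with `0 ≤ δ_j < τ N^{-j}` and let `φ(n) = 2π(δ_1 n + … + δ_d n^d)`, so that the
`n`-th term of `S(x; ·)` is `e^{iφ(n)}` times that of `S(a/m; ·)`. Summation by parts against the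
partial sums `S(a/m; n)`, all bounded by `cK`, bounds `S(x; N) - S(a/m; N)` by `cK` times
`|e^{iφ(N)} - 1|` plus the total variation of `n ↦ e^{iφ(n)}` on `[1, N]`. As `φ` is nonnegative and
increasing, both are at most `φ(N) ≤ 2πdτ`.
-/

open Complex

/-- The Weyl sum `S_d(x; N) = ∑_{n=1}^N e(x_1 n + … + x_d n^d)`. -/
noncomputable def weylSum (d : ℕ) (x : Fin d → ℝ) (N : ℕ) : ℂ :=
  ∑ n ∈ Finset.Icc 1 N,
    Complex.exp (2 * Real.pi * Complex.I * ∑ i : Fin d, (x i : ℂ) * (n : ℂ) ^ ((i : ℕ) + 1))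

open Finset

theorem norm_sum_range_succ_smul_le {R M : Type*} [SeminormedRing R] [SeminormedAddCommGroup M]
    [Module R M] [IsBoundedSMul R M] (u : ℕ → R) (g : ℕ → M) (N : ℕ) {B : ℝ}
    (hB : ∀ n, 1 ≤ n → n ≤ N + 1 → ‖∑ i ∈ range n, g i‖ ≤ B) :
    ‖∑ i ∈ range (N + 1), u i • g i‖ ≤ (‖u N‖ + ∑ i ∈ range N, ‖u (i + 1) - u i‖) * B := by
  rw [sum_range_by_parts, Nat.add_sub_cancel, add_mul, sum_mul]
  refine (norm_sub_le _ _).trans (add_le_add ?_ ((norm_sum_le _ _).trans (sum_le_sum ?_)))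
  · exact (norm_smul_le _ _).trans (by gcongr; exact hB _ N.succ_pos le_rfl)
  · intro i hi
    exact (norm_smul_le _ _).trans (by gcongr; exact hB _ i.succ_pos (by simp at hi; omega))

theorem norm_exp_I_mul_ofReal_sub_exp_I_mul_ofReal_le (s t : ℝ) :
    ‖exp (I * t) - exp (I * s)‖ ≤ |t - s| := by
  have h : exp (I * t) - exp (I * s) = exp (I * s) * (exp (I * ↑(t - s)) - 1) := by
    rw [mul_sub, ← Complex.exp_add, mul_one]
    push_cast
    ring_nf
  rw [h, norm_mul, norm_exp_I_mul_ofReal, one_mul]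
  exact Real.norm_exp_I_mul_ofReal_sub_one_le

theorem sum_range_norm_exp_I_mul_ofReal_sub_le {θ : ℕ → ℝ} (hθ : Monotone θ) (N : ℕ) :
    ∑ i ∈ range N, ‖exp (I * θ (i + 1)) - exp (I * θ i)‖ ≤ θ N - θ 0 := by
  rw [← sum_range_sub]
  refine sum_le_sum fun i _ => ?_
  calc _ ≤ |θ (i + 1) - θ i| := norm_exp_I_mul_ofReal_sub_exp_I_mul_ofReal_le _ _
    _ = θ (i + 1) - θ i := abs_of_nonneg (sub_nonneg.2 (hθ i.le_succ))

noncomputable def weylPhase (d : ℕ) (x : Fin d → ℝ) (n : ℕ) : ℝ :=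
  2 * Real.pi * ∑ i : Fin d, x i * (n : ℝ) ^ ((i : ℕ) + 1)

section weylPhase

variable {d : ℕ}

theorem weylSum_eq_sum_range (x : Fin d → ℝ) (N : ℕ) :
    weylSum d x N = ∑ i ∈ range N, exp (I * weylPhase d x (i + 1)) := by
  rw [weylSum, ← Ico_add_one_right_eq_Icc, sum_Ico_eq_sum_range, Nat.add_sub_cancel]
  refine sum_congr rfl fun i _ => ?_
  rw [weylPhase, add_comm 1 i]
  congr 1
  push_cast
  ring

theorem weylPhase_add (x y : Fin d → ℝ) (n : ℕ) :
    weylPhase d (x + y) n = weylPhase d x n + weylPhase d y n := by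
  simp only [weylPhase, Pi.add_apply, add_mul, sum_add_distrib, mul_add]

theorem weylPhase_nonneg {δ : Fin d → ℝ} (hδ : 0 ≤ δ) (n : ℕ) : 0 ≤ weylPhase d δ n :=
  mul_nonneg (by positivity) (sum_nonneg fun i _ => mul_nonneg (hδ i) (by positivity))

theorem weylPhase_mono {δ : Fin d → ℝ} (hδ : 0 ≤ δ) : Monotone (weylPhase d δ) := by
  intro n₁ n₂ h
  unfold weylPhase
  gcongr with i
  exact hδ i

theorem weylPhase_le_of_le {δ : Fin d → ℝ} {N : ℕ} {τ : ℝ}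
    (hδN : ∀ j, δ j * (N : ℝ) ^ ((j : ℕ) + 1) ≤ τ) : weylPhase d δ N ≤ 2 * Real.pi * (d * τ) := by
  unfold weylPhase
  gcongr
  simpa using sum_le_card_nsmul univ _ τ fun j _ => hδN j

theorem weylSum_add_sub_eq (x δ : Fin d → ℝ) (N : ℕ) :
    weylSum d (x + δ) N - weylSum d x N =
      ∑ i ∈ range N, (exp (I * weylPhase d δ (i + 1)) - 1) * exp (I * weylPhase d x (i + 1)) := by
  simp only [weylSum_eq_sum_range, ← sum_sub_distrib, weylPhase_add, ofReal_add, mul_add,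
    Complex.exp_add, mul_sub_one, mul_comm]

theorem norm_weylSum_add_sub_le {x δ : Fin d → ℝ} (hδ : 0 ≤ δ) {N : ℕ} {B : ℝ}
    (hB : ∀ n, 1 ≤ n → n ≤ N → ‖weylSum d x n‖ ≤ B) :
    ‖weylSum d (x + δ) N - weylSum d x N‖ ≤ 2 * weylPhase d δ N * B := by
  obtain _ | N := N
  · simp [weylSum, weylPhase]
  have hB₀ : 0 ≤ B := (norm_nonneg _).trans (hB 1 le_rfl N.succ_pos)
  set θ : ℕ → ℝ := fun i => weylPhase d δ (i + 1)
  have hθ : Monotone θ := fun i j h => weylPhase_mono hδ (Nat.succ_le_succ h)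
  have hu : ‖exp (I * θ N) - 1‖ ≤ θ N :=
    Real.norm_exp_I_mul_ofReal_sub_one_le.trans_eq
      (Real.norm_of_nonneg (weylPhase_nonneg hδ (N + 1)))
  have hvar : ∑ i ∈ range N, ‖(exp (I * θ (i + 1)) - 1) - (exp (I * θ i) - 1)‖ ≤ θ N := by
    simpa using (sum_range_norm_exp_I_mul_ofReal_sub_le hθ N).trans
      (sub_le_self _ (weylPhase_nonneg hδ 1))
  rw [weylSum_add_sub_eq]
  calc _ ≤ (‖exp (I * θ N) - 1‖ +
          ∑ i ∈ range N, ‖(exp (I * θ (i + 1)) - 1) - (exp (I * θ i) - 1)‖) * B :=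
        norm_sum_range_succ_smul_le (fun i => exp (I * θ i) - 1) _ N fun n hn₁ hn => by
          simpa only [← weylSum_eq_sum_range] using hB n hn₁ hn
    _ ≤ (θ N + θ N) * B := by gcongr
    _ = 2 * θ N * B := by ring

end weylPhase

theorem weyl_sum_rational_approx_general (d : ℕ) (hd : 2 ≤ d) (c : ℝ) (hc : 0 < c)
    (T : ℝ) :
    ∃ C : ℝ, 0 < C ∧ ∀ N : ℕ, 1 ≤ N → ∀ m : ℕ, 2 ≤ m → ∀ a : Fin d → ℤ,
      (∀ j : Fin d, ¬ (m : ℤ) ∣ a j) → ∀ K : ℝ, 0 ≤ K →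
      (∀ n : ℕ, 1 ≤ n → n ≤ N →
        ‖weylSum d (fun j => (a j : ℝ) / m) n‖ ≤ c * K) →
      ∀ τ : ℝ, 0 < τ → τ ≤ T → ∀ x : Fin d → ℝ,
        (∀ j : Fin d, 0 ≤ x j - (a j : ℝ) / m ∧
          x j - (a j : ℝ) / m < τ / (N : ℝ) ^ ((j : ℕ) + 1)) →
        ‖weylSum d x N - weylSum d (fun j => (a j : ℝ) / m) N‖ ≤ C * τ * K := by
  have hd₀ : (0 : ℝ) < d := by exact_mod_cast (two_pos.trans_le hd)
  refine ⟨4 * Real.pi * d * c, by positivity, ?_⟩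
  intro N hN m _ a _ K hK hbound τ _ _ x hx
  set q : Fin d → ℝ := fun j => (a j : ℝ) / m
  have hδ : 0 ≤ x - q := fun j => (hx j).1
  have hδN : ∀ j : Fin d, (x - q) j * (N : ℝ) ^ ((j : ℕ) + 1) ≤ τ := fun j =>
    ((lt_div_iff₀ (by positivity)).1 (hx j).2).le
  calc ‖weylSum d x N - weylSum d q N‖ = ‖weylSum d (q + (x - q)) N - weylSum d q N‖ := by
        rw [add_sub_cancel]
    _ ≤ 2 * weylPhase d (x - q) N * (c * K) := norm_weylSum_add_sub_le hδ hbound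
    _ ≤ 2 * (2 * Real.pi * (d * τ)) * (c * K) := by
        gcongr
        exact weylPhase_le_of_le hδN
    _ = 4 * Real.pi * d * c * τ * K := by ring

theorem weyl_sum_rational_approx (d : ℕ) (hd : 2 ≤ d) (c : ℝ) (hc : 0 < c)
    (T : ℝ) (hT : 0 < T) :
    ∃ C : ℝ, 0 < C ∧ ∀ N : ℕ, 1 ≤ N → ∀ m : ℕ, 2 ≤ m → ∀ a : Fin d → ℤ,
      (∀ j : Fin d, ¬ (m : ℤ) ∣ a j) → ∀ K : ℝ, 0 ≤ K →
      (∀ n : ℕ, 1 ≤ n → n ≤ N →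
        ‖weylSum d (fun j => (a j : ℝ) / m) n‖ ≤ c * K) →
      ∀ τ : ℝ, 0 < τ → τ ≤ T → ∀ x : Fin d → ℝ,
        (∀ j : Fin d, 0 ≤ x j - (a j : ℝ) / m ∧
          x j - (a j : ℝ) / m < τ / (N : ℝ) ^ ((j : ℕ) + 1)) →
        ‖weylSum d x N - weylSum d (fun j => (a j : ℝ) / m) N‖ ≤ C * τ * K :=
  weyl_sum_rational_approx_general d hd c hc T
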